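/- Let X be a closed subspace of complex c₀ and let Y be a complex strictly convex Banach space. Then every norm-attaining bounded complex-linear operator T : X → Y has finite rank. -/

import Mathlib

/-!
Let `‖x‖ = 1` with `‖T x‖ = ‖T‖`. Since `ι x` tends to zero, its coordinates beyond some `N`
are at most `1/2`, so `x + w` stays in the unit ball for every `w` of norm at most `1/2` whose
first `N` coordinates vanish. Hence `T x / ‖T‖` and `T w / ‖T‖` satisfy the hypothesis of complex
strict convexity, which forces `T w = 0`. Thus `T` vanishes on the kernel of the truncation to the
first `N` coordinates, a subspace of finite codimension.
-/

open scoped ZeroAtInfty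

def ComplexStrictlyConvex (Y : Type*) [NormedAddCommGroup Y] [NormedSpace ℂ Y] : Prop :=
  ∀ y z : Y, ‖y‖ = 1 → (∀ θ : ℂ, ‖θ‖ = 1 → ‖y + θ • z‖ ≤ 1) → z = 0

namespace ZeroAtInftyContinuousMap

variable {α E : Type*} [TopologicalSpace α] [NormedAddCommGroup E]

theorem norm_apply_le (f : C₀(α, E)) (a : α) : ‖f a‖ ≤ ‖f‖ :=
  norm_toBCF_eq_norm (f := f) ▸ f.toBCF.norm_coe_le_norm a

theorem norm_le_iff {f : C₀(α, E)} {r : ℝ} (hr : 0 ≤ r) : ‖f‖ ≤ r ↔ ∀ a, ‖f a‖ ≤ r :=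
  norm_toBCF_eq_norm (f := f) ▸ BoundedContinuousFunction.norm_le hr

theorem norm_add_le_one_of_eqOn_zero {f g : C₀(α, E)} {s : Set α} {ε : ℝ}
    (hf : ‖f‖ ≤ 1) (hf_compl : ∀ a ∉ s, ‖f a‖ ≤ 1 - ε) (hg : ‖g‖ ≤ ε) (hgs : Set.EqOn g 0 s) :
    ‖f + g‖ ≤ 1 := by
  refine (norm_le_iff zero_le_one).2 fun a => ?_
  by_cases ha : a ∈ s
  · simpa [hgs ha] using (norm_apply_le f a).trans hf
  · calc ‖(f + g) a‖ ≤ ‖f a‖ + ‖g a‖ := norm_add_le _ _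
      _ ≤ (1 - ε) + ε := add_le_add (hf_compl a ha) ((norm_apply_le g a).trans hg)
      _ = 1 := by ring

end ZeroAtInftyContinuousMap

noncomputable def c₀Truncation (N : ℕ) : C₀(ℕ, ℂ) →ₗ[ℂ] (Fin N → ℂ) where
  toFun f i := f i
  map_add' _ _ := rfl
  map_smul' _ _ := rfl

theorem LinearMap.finiteDimensional_range_of_ker_le {K V W Z : Type*} [Field K]
    [AddCommGroup V] [Module K V] [AddCommGroup W] [Module K W] [AddCommGroup Z] [Module K Z]
    [FiniteDimensional K W] {φ : V →ₗ[K] W} {T : V →ₗ[K] Z} (h : ker φ ≤ ker T) :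
    FiniteDimensional K (range T) := by
  have : FiniteDimensional K (V ⧸ ker φ) := Module.Finite.equiv φ.quotKerEquivRange.symm
  rw [← Submodule.range_liftQ _ T h]
  exact LinearMap.finiteDimensional_range _

section NormAttaining

variable {X Y : Type*} [NormedAddCommGroup X] [NormedSpace ℂ X]
  [NormedAddCommGroup Y] [NormedSpace ℂ Y]

theorem ComplexStrictlyConvex.apply_eq_zero (hY : ComplexStrictlyConvex Y) (T : X →L[ℂ] Y)
    {x w : X} (hTx : ‖T x‖ = ‖T‖) (hw : ∀ θ : ℂ, ‖θ‖ = 1 → ‖x + θ • w‖ ≤ 1) :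
    T w = 0 := by
  rcases eq_or_ne T 0 with rfl | hT
  · rfl
  have hT₀ : ‖T‖ ≠ 0 := norm_ne_zero_iff.2 hT
  suffices (‖T‖⁻¹ : ℂ) • T w = 0 by simpa [hT₀] using this
  refine hY ((‖T‖⁻¹ : ℂ) • T x) _ ?_ fun θ hθ => ?_
  · rw [norm_smul, hTx]
    simp [hT₀]
  calc ‖(‖T‖⁻¹ : ℂ) • T x + θ • (‖T‖⁻¹ : ℂ) • T w‖ = ‖T‖⁻¹ * ‖T (x + θ • w)‖ := by
        rw [smul_comm θ, ← smul_add, norm_smul, map_add, map_smul]; simp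
    _ ≤ ‖T‖⁻¹ * (‖T‖ * ‖x + θ • w‖) := by gcongr; exact T.le_opNorm _
    _ = ‖x + θ • w‖ := by field_simp
    _ ≤ 1 := hw θ hθ

theorem ComplexStrictlyConvex.le_ker (hY : ComplexStrictlyConvex Y) (T : X →L[ℂ] Y)
    {x : X} (hTx : ‖T x‖ = ‖T‖) (V : Submodule ℂ X) {ε : ℝ} (hε : 0 < ε)
    (hV : ∀ w ∈ V, ‖w‖ ≤ ε → ‖x + w‖ ≤ 1) : V ≤ LinearMap.ker (T : X →ₗ[ℂ] Y) := by
  intro z hz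
  rcases eq_or_ne z 0 with rfl | hz₀
  · exact zero_mem _
  have hcz : ‖((ε : ℂ) * (‖z‖ : ℂ)⁻¹) • z‖ = ε := norm_smul_inv_norm' hε.le hz₀
  set c : ℂ := (ε : ℂ) * (‖z‖ : ℂ)⁻¹
  have hc : c ≠ 0 := by simp [c, hε.ne', hz₀]
  have hTcz : T (c • z) = 0 := by
    refine hY.apply_eq_zero T hTx fun θ hθ => hV _ (V.smul_mem _ (V.smul_mem _ hz)) ?_
    rw [norm_smul, hθ, one_mul, hcz]
  simpa [hc] using hTcz

end NormAttaining

theorem stmt_11_general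
    (X : Type*) [NormedAddCommGroup X] [NormedSpace ℂ X]
    (ι : X →ₗᵢ[ℂ] C₀(ℕ, ℂ))
    (Y : Type*) [NormedAddCommGroup Y] [NormedSpace ℂ Y]
    (hY : ∀ y z : Y, ‖y‖ = 1 → (∀ θ : ℂ, ‖θ‖ = 1 → ‖y + θ • z‖ ≤ 1) → z = 0)
    (T : X →L[ℂ] Y)
    (hT : ∃ x : X, ‖x‖ = 1 ∧ ‖T x‖ = ‖T‖) :
    FiniteDimensional ℂ (LinearMap.range (T : X →ₗ[ℂ] Y)) := by
  obtain ⟨x, hx, hTx⟩ := hT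
  have htendsto : Filter.Tendsto (ι x) Filter.atTop (nhds 0) := by
    simpa [cocompact_eq_atTop] using (ι x).zero_at_infty'
  obtain ⟨N, hN⟩ := Metric.tendsto_atTop.1 htendsto (1 / 2) one_half_pos
  refine LinearMap.finiteDimensional_range_of_ker_le (φ := (c₀Truncation N).comp ι.toLinearMap)
    (ComplexStrictlyConvex.le_ker hY T hTx _ one_half_pos fun w hw hw_le => ?_)
  have hw_zero : Set.EqOn (ι w) 0 {n | n < N} := fun n hn =>
    congrFun (LinearMap.mem_ker.1 hw) ⟨n, hn⟩
  rw [← ι.norm_map, map_add]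
  refine (ι x).norm_add_le_one_of_eqOn_zero (ε := 1 / 2) (by rw [ι.norm_map, hx]) (fun n hn => ?_)
    (by rwa [ι.norm_map]) hw_zero
  have hxn := hN n (not_lt.1 hn)
  rw [dist_zero_right] at hxn
  linarith

/-- If `X` is a closed subspace of complex `c₀` (encoded as a complex Banach
space embedding linearly isometrically into `C₀(ℕ, ℂ)` with closed range) and `Y` is a
complex strictly convex Banach space, then every norm-attaining bounded complex-linear
operator `T : X → Y` has finite rank. -/
theorem stmt_11
    (X : Type*) [NormedAddCommGroup X] [NormedSpace ℂ X] [CompleteSpace X]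
    (ι : X →ₗᵢ[ℂ] C₀(ℕ, ℂ)) (hclosed : IsClosed (Set.range ι))
    (Y : Type*) [NormedAddCommGroup Y] [NormedSpace ℂ Y] [CompleteSpace Y]
    (hY : ∀ y z : Y, ‖y‖ = 1 → (∀ θ : ℂ, ‖θ‖ = 1 → ‖y + θ • z‖ ≤ 1) → z = 0)
    (T : X →L[ℂ] Y)
    (hT : ∃ x : X, ‖x‖ = 1 ∧ ‖T x‖ = ‖T‖) :
    FiniteDimensional ℂ (LinearMap.range (T : X →ₗ[ℂ] Y)) :=
  stmt_11_general X ι Y hY T hT
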